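/- For the Gaussian-kernel approximation problem under the normalized error criterion, the problem is strongly polynomially tractable if and only if r(γ) := liminf_{k→∞} ln(γ_k^{-2})/ln k > 0, and in that case the exponent of SPT is 2/r(γ). -/

import Mathlib

open Filter Real Set

/-- Information complexity: the number of multi-indices `(j₁,…,j_d) ∈ ℕ^d`
(here 0-indexed, so `Λ k j` stands for `λ(k+1, j+1)`) whose eigenvalue product exceeds `ε²`. -/
noncomputable def infoCount (Λ : ℕ → ℕ → ℝ) (d : ℕ) (ε : ℝ) : ℕ :=
  Nat.card {j : Fin d → ℕ | ε ^ 2 < ∏ k : Fin d, Λ k.val (j k)}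

/-- Strong polynomial tractability. -/
def IsSPT (Λ : ℕ → ℕ → ℝ) : Prop :=
  ∃ C p : ℝ, 0 ≤ C ∧ 0 ≤ p ∧ ∀ d : ℕ, 1 ≤ d → ∀ ε : ℝ, ε ∈ Set.Ioo (0 : ℝ) 1 →
    (infoCount Λ d ε : ℝ) ≤ C * ε ^ (-p)

/-- The exponent `p*` of strong polynomial tractability. -/
noncomputable def sptExponent (Λ : ℕ → ℕ → ℝ) : ℝ :=
  sInf {p : ℝ | 0 ≤ p ∧ ∃ C : ℝ, 0 ≤ C ∧ ∀ d : ℕ, 1 ≤ d → ∀ ε : ℝ, ε ∈ Set.Ioo (0 : ℝ) 1 →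
    (infoCount Λ d ε : ℝ) ≤ C * ε ^ (-p)}

/-- Polynomial tractability. -/
def IsPT (Λ : ℕ → ℕ → ℝ) : Prop :=
  ∃ C p q : ℝ, 0 ≤ C ∧ 0 ≤ p ∧ 0 ≤ q ∧ ∀ d : ℕ, 1 ≤ d → ∀ ε : ℝ, ε ∈ Set.Ioo (0 : ℝ) 1 →
    (infoCount Λ d ε : ℝ) ≤ C * (d : ℝ) ^ q * ε ^ (-p)

/-- Quasi-polynomial tractability. -/
def IsQPT (Λ : ℕ → ℕ → ℝ) : Prop :=
  ∃ C t : ℝ, 0 < C ∧ 0 < t ∧ ∀ d : ℕ, 1 ≤ d → ∀ ε : ℝ, ε ∈ Set.Ioo (0 : ℝ) 1 →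
    (infoCount Λ d ε : ℝ) ≤ C * Real.exp (t * (1 + Real.log d) * (1 + Real.log ε⁻¹))

/-- The exponent `t*` of quasi-polynomial tractability. -/
noncomputable def qptExponent (Λ : ℕ → ℕ → ℝ) : ℝ :=
  sInf {t : ℝ | 0 < t ∧ ∃ C : ℝ, 0 < C ∧ ∀ d : ℕ, 1 ≤ d → ∀ ε : ℝ, ε ∈ Set.Ioo (0 : ℝ) 1 →
    (infoCount Λ d ε : ℝ) ≤ C * Real.exp (t * (1 + Real.log d) * (1 + Real.log ε⁻¹))}

/-- The filter describing `ε⁻¹ + d → ∞` over pairs `(ε, d)` with `ε ∈ (0,1)` and `d ≥ 1`. -/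
noncomputable def wtFilter : Filter (ℝ × ℕ) :=
  (Filter.comap (fun p : ℝ × ℕ => p.1⁻¹ + (p.2 : ℝ)) Filter.atTop) ⊓
    Filter.principal {p : ℝ × ℕ | p.1 ∈ Set.Ioo (0 : ℝ) 1 ∧ 1 ≤ p.2}

/-- `(s,t)`-weak tractability: `ln n(ε,d) / (ε^{-s} + d^t) → 0` as `ε⁻¹ + d → ∞`. -/
def IsWT (Λ : ℕ → ℕ → ℝ) (s t : ℝ) : Prop :=
  Filter.Tendsto
    (fun p : ℝ × ℕ => Real.log (infoCount Λ p.2 p.1) / (p.1 ^ (-s) + (p.2 : ℝ) ^ t))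
    wtFilter (nhds 0)

/-- Uniform weak tractability. -/
def IsUWT (Λ : ℕ → ℕ → ℝ) : Prop := ∀ s t : ℝ, 0 < s → 0 < t → IsWT Λ s t

/-- The problem suffers from the curse of dimensionality. -/
def SuffersCurse (Λ : ℕ → ℕ → ℝ) : Prop :=
  ∃ C ε₀ α : ℝ, 0 < C ∧ 0 < ε₀ ∧ 0 < α ∧ ∀ ε : ℝ, 0 < ε → ε ≤ ε₀ →
    {d : ℕ | C * (1 + α) ^ d ≤ (infoCount Λ d ε : ℝ)}.Infinite

/-- Condition (3) of Property (P) for a given `τ > 0`: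
`H(k,τ) = ∑_{j≥2} (λ(k,j)/λ(k,2))^τ` is finite for each `k` and
`sup_k H(k,τ) = H(1,τ)` (equivalently `H(k,τ) ≤ H(1,τ)` for all `k`). -/
def Cond3 (Λ : ℕ → ℕ → ℝ) (τ : ℝ) : Prop :=
  0 < τ ∧ (∀ k, Summable fun j : ℕ => (Λ k (j + 1) / Λ k 1) ^ τ) ∧
    ∀ k, (∑' j : ℕ, (Λ k (j + 1) / Λ k 1) ^ τ) ≤ ∑' j : ℕ, (Λ 0 (j + 1) / Λ 0 1) ^ τ

/-- `τ₀`: the infimum of all `τ` satisfying Condition (3). -/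
noncomputable def tau0 (Λ : ℕ → ℕ → ℝ) : ℝ := sInf {τ : ℝ | Cond3 Λ τ}

/-- Property (P): each sequence `λ(k,·)` is nonincreasing and nonnegative with `λ(k,1) = 1`
and `λ(k,2) > 0`, `h_k = λ(k,2)` is nonincreasing, and Condition (3) holds for some `τ > 0`. -/
structure PropertyP (Λ : ℕ → ℕ → ℝ) : Prop where
  nonneg : ∀ k j, 0 ≤ Λ k j
  anti : ∀ k, Antitone (Λ k)
  first : ∀ k, Λ k 0 = 1
  second_pos : ∀ k, 0 < Λ k 1
  h_anti : Antitone fun k => Λ k 1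
  cond3 : ∃ τ : ℝ, Cond3 Λ τ

/-- `ω_γ = 2γ²/(1+2γ²+√(1+4γ²))`, as a function of `c = γ²`. -/
noncomputable def omegaOf (c : ℝ) : ℝ := 2 * c / (1 + 2 * c + Real.sqrt (1 + 4 * c))

/-- Normalized eigenvalues of the Gaussian-kernel problem:
`λ(k,j)/λ(k,1) = ω_{γ_k}^{j-1}` (0-indexed: `gaussLam γsq k j = ω_{γ_{k+1}}^j`,
where `γsq k = γ_{k+1}²`). -/
noncomputable def gaussLam (γsq : ℕ → ℝ) (k j : ℕ) : ℝ := omegaOf (γsq k) ^ j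

/-
Write `ω_k = omegaOf (γsq k)`, so that the normalized eigenvalues are `ω_k ^ j`, and
`γ_k² / (1 + 2γ_1²) ≤ ω_k ≤ γ_k²`; hence `∑ ω_k^τ` and `∑ γ_k^{2τ}` converge together.

If `∑ ω_k^τ < ∞`, every counted multi-index satisfies `ε^{2τ} < ∏_k (ω_k^τ)^{j_k}`, and summing
over all multi-indices gives `n(ε,d) ε^{2τ} ≤ ∏_k (1 - ω_k^τ)⁻¹ ≤ exp (∑_k ω_k^τ / (1 - ω_1^τ))`,
a bound with exponent `2τ` uniform in `d`. Conversely the unit vectors `e_1, …, e_k` are counted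
by `n(ε, k)` as soon as `ε² < ω_k`, so a bound `n(ε,d) ≤ C ε^{-p}` used at `ε² = ω_k / 2` gives
`ω_k = O(k^{-2/p})`, hence `∑ ω_k^τ < ∞` for every `τ > p/2`.

Finally, for the nonincreasing sequence `γ_k²`, `∑ γ_k^{2τ}` converges when `τ r(γ) > 1` (then
`γ_k^{2τ} ≤ k^{-s τ}` eventually, for some `s τ > 1`) and diverges when `τ r(γ) < 1` (since
`k γ_k^{2τ} ≤ ∑_{i ≤ k} γ_i^{2τ}`). So `p` is an SPT exponent for every `p > 2 / r(γ)` and for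
no `p < 2 / r(γ)`.
-/

lemma summable_of_eventually_le_mul_rpow_neg {a : ℕ → ℝ} (ha : ∀ k, 0 ≤ a k) {C s : ℝ}
    (hs : 1 < s) (h : ∀ᶠ k in atTop, a k ≤ C * ((k : ℝ) + 1) ^ (-s)) : Summable a := by
  have hsum : Summable fun k : ℕ => ((k : ℝ) + 1) ^ (-s) := by
    simpa using (summable_nat_add_iff 1).2 (Real.summable_nat_rpow.2 (by linarith : -s < -1))
  refine (hsum.mul_left C).of_norm_bounded_eventually_nat ?_
  filter_upwards [h] with k hk
  rwa [Real.norm_of_nonneg (ha k)]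

lemma succ_mul_le_tsum_of_antitone {f : ℕ → ℝ} (hf : Antitone f) (h0 : ∀ k, 0 ≤ f k)
    (hs : Summable f) (k : ℕ) : ((k : ℝ) + 1) * f k ≤ ∑' i, f i :=
  calc ((k : ℝ) + 1) * f k = ∑ _i ∈ Finset.range (k + 1), f k := by simp
    _ ≤ ∑ i ∈ Finset.range (k + 1), f i :=
        Finset.sum_le_sum fun i hi => hf (Nat.lt_succ_iff.1 (Finset.mem_range.1 hi))
    _ ≤ ∑' i, f i := hs.sum_le_tsum _ fun i _ => h0 i

lemma prod_inv_one_sub_le_exp {ι : Type*} {s : Finset ι} {x : ι → ℝ} {b : ℝ}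
    (hx : ∀ i ∈ s, 0 ≤ x i ∧ x i ≤ b) (hb : b < 1) :
    ∏ i ∈ s, (1 - x i)⁻¹ ≤ exp ((∑ i ∈ s, x i) / (1 - b)) := by
  rw [Finset.sum_div, Real.exp_sum]
  refine Finset.prod_le_prod (fun i hi => ?_) (fun i hi => ?_)
  · exact inv_nonneg.2 (by linarith [(hx i hi).2])
  · obtain ⟨hx0, hxb⟩ := hx i hi
    have hx1 : 1 - x i ≠ 0 := by linarith
    calc (1 - x i)⁻¹ = 1 + x i / (1 - x i) := by field_simp; ring
      _ ≤ 1 + x i / (1 - b) := by gcongr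
      _ ≤ exp (x i / (1 - b)) := by linarith [Real.add_one_le_exp (x i / (1 - b))]

lemma lt_log_inv_div_log_iff {x s : ℝ} (hx : 0 < x) {k : ℕ} (hk : 1 ≤ k) :
    s < log x⁻¹ / log ((k : ℝ) + 1) ↔ x < ((k : ℝ) + 1) ^ (-s) := by
  have hL : 0 < log ((k : ℝ) + 1) := Real.log_pos (by norm_cast; omega)
  rw [lt_div_iff₀ hL, Real.log_inv, ← Real.log_lt_log_iff hx (by positivity),
    Real.log_rpow (by positivity)]
  constructor <;> intro h <;> linarith

noncomputable def polyDecayRate (a : ℕ → ℝ) : EReal :=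
  liminf (fun k : ℕ => (log (a k)⁻¹ / log ((k : ℝ) + 1) : EReal)) atTop

section polyDecayRate

variable {a : ℕ → ℝ}

lemma summable_rpow_of_lt_polyDecayRate (ha : ∀ k, 0 < a k) {τ : ℝ} (hτ : 0 < τ)
    (h : ((τ⁻¹ : ℝ) : EReal) < polyDecayRate a) : Summable fun k => a k ^ τ := by
  obtain ⟨s, hτs, hs⟩ := EReal.exists_between_coe_real h
  have hsτ : 1 < s * τ := (inv_lt_iff_one_lt_mul₀ hτ).1 (EReal.coe_lt_coe_iff.1 hτs)
  refine summable_of_eventually_le_mul_rpow_neg (C := 1) (fun k => rpow_nonneg (ha k).le τ) hsτ ?_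
  filter_upwards [eventually_lt_of_lt_liminf hs, eventually_ge_atTop 1] with k hk hk1
  rw [← EReal.coe_div, EReal.coe_lt_coe_iff, lt_log_inv_div_log_iff (ha k) hk1] at hk
  calc a k ^ τ ≤ (((k : ℝ) + 1) ^ (-s)) ^ τ := by gcongr; exact (ha k).le
    _ = 1 * ((k : ℝ) + 1) ^ (-(s * τ)) := by rw [← rpow_mul (by positivity), one_mul, neg_mul]

lemma le_polyDecayRate_of_summable_rpow (ha : ∀ k, 0 < a k) (hanti : Antitone a) {τ : ℝ}
    (hτ : 0 < τ) (hsum : Summable fun k => a k ^ τ) : ((τ⁻¹ : ℝ) : EReal) ≤ polyDecayRate a := by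
  rw [← EReal.ge_of_forall_gt_iff_ge]
  intro s hs
  have hsτ : 0 < 1 - s * τ := by
    have := EReal.coe_lt_coe_iff.1 hs
    rw [← one_div, lt_div_iff₀ hτ] at this
    linarith
  have htend : Tendsto (fun k : ℕ => ((k : ℝ) + 1) ^ (1 - s * τ)) atTop atTop :=
    (tendsto_rpow_atTop hsτ).comp (tendsto_atTop_add_const_right _ 1 tendsto_natCast_atTop_atTop)
  refine le_liminf_of_le (by isBoundedDefault) ?_
  filter_upwards [htend.eventually_gt_atTop (∑' i, a i ^ τ), eventually_ge_atTop 1] with k hk hk1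
  rw [← EReal.coe_div, EReal.coe_le_coe_iff]
  refine ((lt_log_inv_div_log_iff (ha k) hk1).2 ?_).le
  have hk0 : (0 : ℝ) < k + 1 := by positivity
  rw [← rpow_lt_rpow_iff (ha k).le (by positivity) hτ, ← rpow_mul hk0.le]
  calc a k ^ τ ≤ (∑' i, a i ^ τ) / ((k : ℝ) + 1) := by
        rw [le_div_iff₀ hk0, mul_comm]
        exact succ_mul_le_tsum_of_antitone (fun i j hij => rpow_le_rpow (ha j).le (hanti hij) hτ.le)
          (fun i => rpow_nonneg (ha i).le τ) hsum k
    _ < ((k : ℝ) + 1) ^ (1 - s * τ) / ((k : ℝ) + 1) := by gcongr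
    _ = ((k : ℝ) + 1) ^ (-s * τ) := by rw [← rpow_sub_one hk0.ne']; ring_nf

end polyDecayRate

def geomLam (ω : ℕ → ℝ) (k j : ℕ) : ℝ := ω k ^ j

def SPTBound (Λ : ℕ → ℕ → ℝ) (C p : ℝ) : Prop :=
  ∀ d : ℕ, 1 ≤ d → ∀ ε : ℝ, ε ∈ Set.Ioo (0 : ℝ) 1 → (infoCount Λ d ε : ℝ) ≤ C * ε ^ (-p)

section geomLam

variable {ω : ℕ → ℝ}

lemma prod_pow_le_pow_of_antitone (h0 : ∀ k, 0 ≤ ω k) (h1 : ∀ k, ω k ≤ 1) (hanti : Antitone ω)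
    {d : ℕ} (j : Fin d → ℕ) (i : Fin d) : ∏ k : Fin d, ω k ^ j k ≤ ω 0 ^ j i :=
  calc ∏ k : Fin d, ω k ^ j k ≤ ∏ k : Fin d, ω 0 ^ j k :=
        Finset.prod_le_prod (fun _ _ => pow_nonneg (h0 _) _)
          (fun _ _ => pow_le_pow_left₀ (h0 _) (hanti (Nat.zero_le _)) _)
    _ = ω 0 ^ ∑ k, j k := Finset.prod_pow_eq_pow_sum _ _ _
    _ ≤ ω 0 ^ j i := pow_le_pow_of_le_one (h0 0) (h1 0)
        (Finset.single_le_sum (fun _ _ => Nat.zero_le _) (Finset.mem_univ i))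

lemma setOf_lt_prod_subset_piFinset (h0 : ∀ k, 0 ≤ ω k) (h1 : ∀ k, ω k ≤ 1)
    (hanti : Antitone ω) {ε : ℝ} {N : ℕ} (hN : ω 0 ^ N ≤ ε ^ 2) (d : ℕ) :
    {j : Fin d → ℕ | ε ^ 2 < ∏ k : Fin d, geomLam ω k (j k)} ⊆
      ↑(Fintype.piFinset fun _ : Fin d => Finset.range N) := by
  intro j hj
  rw [Finset.mem_coe, Fintype.mem_piFinset]
  intro i
  rw [Finset.mem_range]
  by_contra! hi
  have := hj.trans_le (prod_pow_le_pow_of_antitone h0 h1 hanti j i)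
  exact this.not_ge ((pow_le_pow_of_le_one (h0 0) (h1 0) hi).trans hN)

lemma infoCount_geomLam_mul_le (h0 : ∀ k, 0 ≤ ω k) (h1 : ∀ k, ω k < 1) (hanti : Antitone ω)
    {τ : ℝ} (hτ : 0 < τ) (d : ℕ) {ε : ℝ} (hε : 0 < ε) :
    (infoCount (geomLam ω) d ε : ℝ) * (ε ^ 2) ^ τ ≤ ∏ k : Fin d, (1 - ω k ^ τ)⁻¹ := by
  obtain ⟨N, hN⟩ := exists_pow_lt_of_lt_one (by positivity : 0 < ε ^ 2) (h1 0)
  have hsub := setOf_lt_prod_subset_piFinset h0 (fun k => (h1 k).le) hanti hN.le d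
  have hfin := (Finset.finite_toSet _).subset hsub
  have hx0 k : 0 ≤ ω k ^ τ := rpow_nonneg (h0 k) τ
  rw [infoCount, Nat.card_coe_set_eq, Set.ncard_eq_toFinset_card _ hfin]
  calc ((hfin.toFinset.card : ℕ) : ℝ) * (ε ^ 2) ^ τ = ∑ _j ∈ hfin.toFinset, (ε ^ 2) ^ τ := by
        rw [Finset.sum_const, nsmul_eq_mul]
    _ ≤ ∑ j ∈ hfin.toFinset, ∏ k : Fin d, (ω k ^ τ) ^ j k := by
        refine Finset.sum_le_sum fun j hj => ?_
        have hj : ε ^ 2 < ∏ k : Fin d, ω k ^ j k := hfin.mem_toFinset.1 hj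
        calc (ε ^ 2) ^ τ ≤ (∏ k : Fin d, ω k ^ j k) ^ τ := by gcongr
          _ = ∏ k : Fin d, (ω k ^ τ) ^ j k := by
            rw [← Real.finsetProd_rpow _ (fun k : Fin d => ω k ^ j k)
              (fun k _ => pow_nonneg (h0 k) _)]
            exact Finset.prod_congr rfl fun k _ => (Real.rpow_pow_comm (h0 k) τ (j k)).symm
    _ ≤ ∑ j ∈ Fintype.piFinset (fun _ : Fin d => Finset.range N),
          ∏ k : Fin d, (ω k ^ τ) ^ j k :=
        Finset.sum_le_sum_of_subset_of_nonneg (by simpa using hsub)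
          (fun j _ _ => Finset.prod_nonneg fun k _ => pow_nonneg (hx0 k) _)
    _ = ∏ k : Fin d, ∑ i ∈ Finset.range N, (ω k ^ τ) ^ i := (Finset.prod_univ_sum _ _).symm
    _ ≤ ∏ k : Fin d, (1 - ω k ^ τ)⁻¹ := by
        refine Finset.prod_le_prod (fun k _ => Finset.sum_nonneg fun i _ => pow_nonneg (hx0 k) _)
          (fun k _ => ?_)
        have hx1 : ω k ^ τ < 1 := Real.rpow_lt_one (h0 k) (h1 k) hτ
        rw [← tsum_geometric_of_lt_one (hx0 k) hx1]
        exact Summable.sum_le_tsum _ (fun i _ => pow_nonneg (hx0 k) i)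
          (summable_geometric_of_lt_one (hx0 k) hx1)

lemma sptBound_geomLam (h0 : ∀ k, 0 ≤ ω k) (h1 : ∀ k, ω k < 1) (hanti : Antitone ω) {τ : ℝ}
    (hτ : 0 < τ) (hsum : Summable fun k => ω k ^ τ) :
    SPTBound (geomLam ω) (exp ((∑' k, ω k ^ τ) / (1 - ω 0 ^ τ))) (2 * τ) := by
  intro d _ ε ⟨hε0, _⟩
  have hx0 k : 0 ≤ ω k ^ τ := rpow_nonneg (h0 k) τ
  have hx1 : ω 0 ^ τ < 1 := Real.rpow_lt_one (h0 0) (h1 0) hτ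
  have hprod : ∏ k : Fin d, (1 - ω k ^ τ)⁻¹ ≤ exp ((∑' k, ω k ^ τ) / (1 - ω 0 ^ τ)) := by
    refine (prod_inv_one_sub_le_exp (x := fun k : Fin d => ω k ^ τ)
      (fun k _ => ⟨hx0 k, ?_⟩) hx1).trans ?_
    · exact rpow_le_rpow (h0 k) (hanti (Nat.zero_le k)) hτ.le
    · gcongr
      rw [Fin.sum_univ_eq_sum_range (fun k => ω k ^ τ) d]
      exact hsum.sum_le_tsum _ fun k _ => hx0 k
  have hεp : ε ^ (-(2 * τ)) = ((ε ^ 2) ^ τ)⁻¹ := by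
    rw [rpow_neg hε0.le, ← Real.rpow_natCast, ← rpow_mul hε0.le]
    norm_num
  rw [hεp, ← div_eq_mul_inv, le_div_iff₀ (by positivity)]
  exact (infoCount_geomLam_mul_le h0 h1 hanti hτ d hε0).trans hprod

lemma succ_le_infoCount_geomLam (h0 : ∀ k, 0 ≤ ω k) (h1 : ∀ k, ω k < 1) (hanti : Antitone ω)
    {ε : ℝ} (hε : 0 < ε) {k : ℕ} (hk : ε ^ 2 < ω k) :
    k + 1 ≤ infoCount (geomLam ω) (k + 1) ε := by
  obtain ⟨N, hN⟩ := exists_pow_lt_of_lt_one (by positivity : 0 < ε ^ 2) (h1 0)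
  have : Finite _ := ((Finset.finite_toSet _).subset
    (setOf_lt_prod_subset_piFinset h0 (fun k => (h1 k).le) hanti hN.le (k + 1))).to_subtype
  have hmem (i : Fin (k + 1)) :
      ε ^ 2 < ∏ l : Fin (k + 1), geomLam ω l ((Pi.single i 1 : Fin (k + 1) → ℕ) l) := by
    rw [Fintype.prod_eq_single i fun l hl => by simp [geomLam, hl]]
    simpa [geomLam] using hk.trans_le (hanti (Nat.lt_succ_iff.1 i.2))
  calc k + 1 = Nat.card (Fin (k + 1)) := (Nat.card_fin _).symm
    _ ≤ infoCount (geomLam ω) (k + 1) ε :=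
      Nat.card_le_card_of_injective (fun i => ⟨_, hmem i⟩) fun i i' h => by
        have := congrFun (congrArg Subtype.val h) i
        by_contra hne
        simp [hne] at this

lemma succ_mul_rpow_le_of_sptBound (h0 : ∀ k, 0 < ω k) (h1 : ∀ k, ω k < 1) (hanti : Antitone ω)
    {C p : ℝ} (hb : SPTBound (geomLam ω) C p) (k : ℕ) :
    ((k : ℝ) + 1) * (ω k / 2) ^ (p / 2) ≤ C := by
  set x := ω k / 2
  have hx0 : 0 < x := half_pos (h0 k)
  have hxω : x < ω k := half_lt_self (h0 k)
  have hε0 : 0 < √x := Real.sqrt_pos.2 hx0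
  have hε1 : √x < 1 := (Real.sqrt_lt' one_pos).2 (by linarith [h1 k])
  have hcount := succ_le_infoCount_geomLam (fun k => (h0 k).le) h1 hanti hε0
    (by rwa [Real.sq_sqrt hx0.le])
  have hle := (Nat.cast_le.2 hcount).trans (hb (k + 1) (by omega) (√x) ⟨hε0, hε1⟩)
  rw [Real.sqrt_eq_rpow, ← rpow_mul hx0.le] at hle
  push_cast at hle
  calc ((k : ℝ) + 1) * x ^ (p / 2) ≤ C * x ^ (1 / 2 * -p) * x ^ (p / 2) := by gcongr
    _ = C := by rw [mul_assoc, ← rpow_add hx0, show 1 / 2 * -p + p / 2 = 0 by ring, rpow_zero,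
      mul_one]

lemma summable_rpow_of_sptBound (h0 : ∀ k, 0 < ω k) (h1 : ∀ k, ω k < 1) (hanti : Antitone ω)
    {C p τ : ℝ} (hb : SPTBound (geomLam ω) C p) (hp : 0 ≤ p) (hτ : p / 2 < τ) :
    Summable fun k => ω k ^ τ := by
  have hbound := succ_mul_rpow_le_of_sptBound h0 h1 hanti hb
  obtain rfl | hp := hp.eq_or_lt
  · have := hbound ⌈C⌉₊
    simp only [zero_div, rpow_zero, mul_one] at this
    linarith [Nat.le_ceil C]
  have hC : 0 ≤ C := (mul_nonneg (by positivity) (rpow_nonneg (half_pos (h0 0)).le _)).trans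
    (hbound 0)
  set q := 2 * τ / p
  have hq : 1 < q := by rw [lt_div_iff₀ hp]; linarith
  have hpq : p / 2 * q = τ := by simp only [q]; field_simp
  refine summable_of_eventually_le_mul_rpow_neg (fun k => rpow_nonneg (h0 k).le τ) hq
    (C := 2 ^ τ * C ^ q) (.of_forall fun k => ?_)
  have hx : 0 < ω k / 2 := half_pos (h0 k)
  calc ω k ^ τ = 2 ^ τ * ((ω k / 2) ^ (p / 2)) ^ q := by
        rw [← rpow_mul hx.le, hpq, ← mul_rpow (by norm_num) hx.le]
        ring_nf
    _ ≤ 2 ^ τ * (C / ((k : ℝ) + 1)) ^ q := by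
        gcongr
        rw [le_div_iff₀ (by positivity), mul_comm]
        exact hbound k
    _ = 2 ^ τ * C ^ q * ((k : ℝ) + 1) ^ (-q) := by
        rw [div_rpow hC (by positivity), rpow_neg (by positivity)]
        ring

end geomLam

lemma omegaOf_eq {c : ℝ} (hc : 0 ≤ c) : omegaOf c = 1 - 2 / (√(1 + 4 * c) + 1) := by
  have hs : √(1 + 4 * c) ^ 2 = 1 + 4 * c := Real.sq_sqrt (by linarith)
  have hs0 := Real.sqrt_nonneg (1 + 4 * c)
  rw [omegaOf]
  generalize √(1 + 4 * c) = s at *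
  field_simp
  nlinarith

lemma omegaOf_monotoneOn : MonotoneOn omegaOf (Ici 0) := by
  intro a ha b hb hab
  rw [omegaOf_eq ha, omegaOf_eq hb]
  gcongr

lemma omegaOf_pos {c : ℝ} (hc : 0 < c) : 0 < omegaOf c := by
  unfold omegaOf; positivity

lemma omegaOf_lt_one {c : ℝ} (hc : 0 ≤ c) : omegaOf c < 1 := by
  rw [omegaOf_eq hc]
  have := Real.sqrt_nonneg (1 + 4 * c)
  have : 0 < 2 / (√(1 + 4 * c) + 1) := by positivity
  linarith

lemma omegaOf_le_self {c : ℝ} (hc : 0 ≤ c) : omegaOf c ≤ c := by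
  have : 1 ≤ √(1 + 4 * c) := Real.one_le_sqrt.2 (by linarith)
  rw [omegaOf, div_le_iff₀ (by positivity)]
  nlinarith

lemma div_one_add_two_mul_le_omegaOf {c : ℝ} (hc : 0 ≤ c) : c / (1 + 2 * c) ≤ omegaOf c := by
  have hs : √(1 + 4 * c) ≤ 1 + 2 * c :=
    Real.sqrt_le_iff.2 ⟨by positivity, by nlinarith⟩
  rw [omegaOf, div_le_div_iff₀ (by positivity) (by positivity)]
  nlinarith

lemma summable_omegaOf_rpow_iff {a : ℕ → ℝ} (ha : ∀ k, 0 < a k) (hanti : Antitone a) {τ : ℝ}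
    (hτ : 0 ≤ τ) : Summable (fun k => omegaOf (a k) ^ τ) ↔ Summable (fun k => a k ^ τ) := by
  have hω k := omegaOf_pos (ha k)
  constructor
  · intro h
    refine .of_nonneg_of_le (fun k => rpow_nonneg (ha k).le τ) (fun k => ?_)
      (h.mul_left ((1 + 2 * a 0) ^ τ))
    have hle : a k ≤ (1 + 2 * a 0) * omegaOf (a k) := by
      have := div_one_add_two_mul_le_omegaOf (ha k).le
      rw [div_le_iff₀ (by linarith [ha k])] at this
      nlinarith [hanti (Nat.zero_le k), hω k]
    calc a k ^ τ ≤ ((1 + 2 * a 0) * omegaOf (a k)) ^ τ := by gcongr; exact (ha k).le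
      _ = _ := mul_rpow (by linarith [ha 0]) (hω k).le
  · refine fun h => .of_nonneg_of_le (fun k => rpow_nonneg (hω k).le τ) (fun k => ?_) h
    gcongr
    exacts [(hω k).le, omegaOf_le_self (ha k).le]

section gaussLam

variable {γsq : ℕ → ℝ}

lemma antitone_omegaOf_comp (hpos : ∀ k, 0 < γsq k) (hanti : Antitone γsq) :
    Antitone fun k => omegaOf (γsq k) :=
  fun _ j hij => omegaOf_monotoneOn (hpos j).le (hpos _).le (hanti hij)

lemma two_div_le_polyDecayRate_of_sptBound (hpos : ∀ k, 0 < γsq k) (hanti : Antitone γsq)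
    {C p q : ℝ} (hb : SPTBound (gaussLam γsq) C p) (hp : 0 ≤ p) (hpq : p < q) :
    ((2 / q : ℝ) : EReal) ≤ polyDecayRate γsq := by
  have hsum := summable_rpow_of_sptBound (fun k => omegaOf_pos (hpos k))
    (fun k => omegaOf_lt_one (hpos k).le) (antitone_omegaOf_comp hpos hanti) hb hp
    (by linarith : p / 2 < q / 2)
  rw [summable_omegaOf_rpow_iff hpos hanti (by linarith)] at hsum
  have := le_polyDecayRate_of_summable_rpow hpos hanti (by linarith) hsum
  rwa [inv_div] at this

lemma sptBound_of_two_div_lt_polyDecayRate (hpos : ∀ k, 0 < γsq k) (hanti : Antitone γsq)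
    {q : ℝ} (hq : 0 < q) (h : ((2 / q : ℝ) : EReal) < polyDecayRate γsq) :
    ∃ C, 0 ≤ C ∧ SPTBound (gaussLam γsq) C q := by
  rw [← inv_div] at h
  have hsum := summable_rpow_of_lt_polyDecayRate hpos (half_pos hq) h
  rw [← summable_omegaOf_rpow_iff hpos hanti (half_pos hq).le] at hsum
  have := sptBound_geomLam (fun k => (omegaOf_pos (hpos k)).le)
    (fun k => omegaOf_lt_one (hpos k).le) (antitone_omegaOf_comp hpos hanti) (half_pos hq) hsum
  rw [mul_div_cancel₀ _ two_ne_zero] at this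
  exact ⟨_, (exp_pos _).le, this⟩

end gaussLam

lemma coe_div_lt_iff_div_toReal_lt {L : EReal} (hL : 0 < L) {c q : ℝ} (hq : 0 < q) :
    ((c / q : ℝ) : EReal) < L ↔ c / L.toReal < q := by
  induction L using EReal.rec with
  | bot => exact absurd hL (by simp)
  | coe ρ => rw [EReal.coe_lt_coe_iff, EReal.toReal_coe, div_lt_comm₀ hq (EReal.coe_pos.1 hL)]
  | top => simpa using hq

lemma coe_div_le_iff_div_toReal_le {L : EReal} (hL : 0 < L) {c q : ℝ} (hq : 0 < q) :
    ((c / q : ℝ) : EReal) ≤ L ↔ c / L.toReal ≤ q := by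
  induction L using EReal.rec with
  | bot => exact absurd hL (by simp)
  | coe ρ => rw [EReal.coe_le_coe_iff, EReal.toReal_coe, div_le_comm₀ hq (EReal.coe_pos.1 hL)]
  | top => simpa using hq.le

lemma isSPT_iff_and_sptExponent_eq {Λ : ℕ → ℕ → ℝ} {L : EReal}
    (hle : ∀ C p q, SPTBound Λ C p → 0 ≤ p → p < q → ((2 / q : ℝ) : EReal) ≤ L)
    (hbound : ∀ q, 0 < q → ((2 / q : ℝ) : EReal) < L → ∃ C, 0 ≤ C ∧ SPTBound Λ C q) :
    (IsSPT Λ ↔ 0 < L) ∧ (0 < L → sptExponent Λ = 2 / L.toReal) := by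
  have hup (hL : 0 < L) (q : ℝ) (hq : 2 / L.toReal < q) : ∃ C, 0 ≤ C ∧ SPTBound Λ C q := by
    have hq0 : 0 < q := (div_nonneg zero_le_two (EReal.toReal_nonneg hL.le)).trans_lt hq
    exact hbound q hq0 ((coe_div_lt_iff_div_toReal_lt hL hq0).2 hq)
  refine ⟨⟨fun ⟨C, p, _, hp, hb⟩ => ?_, fun hL => ?_⟩, fun hL => ?_⟩
  · exact (EReal.coe_pos.2 (by positivity)).trans_le (hle C p (p + 1) hb hp (lt_add_one p))
  · obtain ⟨C, hC, hb⟩ := hup hL _ (lt_add_one _)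
    exact ⟨C, _, hC, by positivity, hb⟩
  · apply csInf_eq_of_forall_ge_of_forall_gt_exists_lt
    · obtain ⟨C, hC, hb⟩ := hup hL _ (lt_add_one _)
      exact ⟨_, by positivity, C, hC, hb⟩
    · rintro p ⟨hp, C, -, hb⟩
      exact le_of_forall_gt_imp_ge_of_dense fun q hq =>
        (coe_div_le_iff_div_toReal_le hL (hp.trans_lt hq)).1 (hle C p q hb hp hq)
    · intro w hw
      obtain ⟨q, hq, hqw⟩ := exists_between hw
      obtain ⟨C, hC, hb⟩ := hup hL q hq
      exact ⟨q, ⟨(div_nonneg zero_le_two (EReal.toReal_nonneg hL.le)).trans hq.le, C, hC, hb⟩, hqw⟩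

/-- Gaussian kernels, normalized error criterion: SPT iff
`r(γ) = liminf ln(γ_k⁻²)/ln k > 0`, and in that case the exponent of SPT is `2/r(γ)`. -/
theorem gauss_spt (γsq : ℕ → ℝ) (hpos : ∀ k, 0 < γsq k) (hanti : Antitone γsq) :
    (IsSPT (gaussLam γsq) ↔
      0 < Filter.liminf
        (fun k : ℕ => (Real.log (γsq k)⁻¹ / Real.log ((k : ℝ) + 1) : EReal))
        Filter.atTop) ∧
    (0 < Filter.liminf
        (fun k : ℕ => (Real.log (γsq k)⁻¹ / Real.log ((k : ℝ) + 1) : EReal))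
        Filter.atTop →
      sptExponent (gaussLam γsq) =
        2 / (Filter.liminf
          (fun k : ℕ => (Real.log (γsq k)⁻¹ / Real.log ((k : ℝ) + 1) : EReal))
          Filter.atTop).toReal) :=
  isSPT_iff_and_sptExponent_eq (L := polyDecayRate γsq)
    (fun _ _ _ hb hp hpq => two_div_le_polyDecayRate_of_sptBound hpos hanti hb hp hpq)
    (fun _ hq h => sptBound_of_two_div_lt_polyDecayRate hpos hanti hq h)
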